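/- Let F be a cdf, let α > 0 and let ε > 0. Then there exists an F-net N such that φ_{F,α}(G) ≤ ψ_{F,N}(G) + ε for every cdf G. -/

import Mathlib

open Filter Topology

/-- A cumulative distribution function: nondecreasing, right-continuous,
tending to 0 at -∞ and to 1 at +∞. -/
def IsCDF (F : ℝ → ℝ) : Prop :=
  Monotone F ∧ (∀ x : ℝ, ContinuousWithinAt F (Set.Ici x) x) ∧
    Tendsto F atBot (nhds 0) ∧ Tendsto F atTop (nhds 1)

/-- φ_{F,α}(G) = sup_x max{F(x-α) - G(x), G(x) - F(x+α)}. -/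
noncomputable def phi (F : ℝ → ℝ) (α : ℝ) (G : ℝ → ℝ) : ℝ :=
  ⨆ x : ℝ, max (F (x - α) - G x) (G x - F (x + α))

/-- ψ_{F,N}(G) = sup_{x ∈ N} |F(x) - G(x)| for a finite set N. -/
noncomputable def psi (F : ℝ → ℝ) (N : Finset ℝ) (G : ℝ → ℝ) : ℝ :=
  sSup ((fun x => |F x - G x|) '' N)

/-- The Lévy metric with parameter γ. -/
noncomputable def levy (γ : ℝ) (F G : ℝ → ℝ) : ℝ :=
  sInf {α : ℝ | 0 < α ∧ ∀ x : ℝ, F (x - γ * α) - α ≤ G x ∧ G x ≤ F (x + γ * α) + α}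

/-- The escape index χ_e(𝓓) = inf_{M>0} sup_{F ∈ 𝓓} max{F(-M), 1 - F(M)}. -/
noncomputable def chiE (D : Set (ℝ → ℝ)) : ℝ :=
  sInf ((fun M => sSup ((fun F => max (F (-M)) (1 - F M)) '' D)) '' (Set.Ioi (0 : ℝ)))

lemma IsCDF.nonneg' {F : ℝ → ℝ} (hF : IsCDF F) (x : ℝ) : 0 ≤ F x :=
  le_of_tendsto hF.2.2.1 (eventually_atBot.2 ⟨x, fun y hy => hF.1 hy⟩)

lemma IsCDF.le_one' {F : ℝ → ℝ} (hF : IsCDF F) (x : ℝ) : F x ≤ 1 :=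
  ge_of_tendsto hF.2.2.2 (eventually_atTop.2 ⟨x, fun y hy => hF.1 hy⟩)

lemma abs_le_psi {F G : ℝ → ℝ} (hF : IsCDF F) (hG : IsCDF G) (N : Finset ℝ)
    {z : ℝ} (hz : z ∈ N) : |F z - G z| ≤ psi F N G := by
  have hb : ∀ x : ℝ, (⨆ _ : x ∈ N, |F x - G x|) ≤ 1 := by
    intro x
    apply Real.iSup_le _ zero_le_one
    intro _
    have h1 := hF.nonneg' x; have h2 := hF.le_one' x
    have h3 := hG.nonneg' x; have h4 := hG.le_one' x
    rw [abs_le]; constructor <;> linarith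
  have hbdd : BddAbove (Set.range fun x => ⨆ _ : x ∈ N, |F x - G x|) :=
    ⟨1, by rintro _ ⟨x, rfl⟩; exact hb x⟩
  have h0 : (⨆ _ : z ∈ N, |F z - G z|) = |F z - G z| := ciSup_pos hz
  calc |F z - G z| = ⨆ _ : z ∈ N, |F z - G z| := h0.symm
    _ ≤ psi F N G := by
      rw [h0]; exact le_csSup (Set.Finite.bddAbove (N.finite_toSet.image _)) ⟨z, hz, rfl⟩

theorem phi_le_psi_add (F : ℝ → ℝ) (hF : IsCDF F) (α : ℝ) (hα : 0 < α)
    (ε : ℝ) (hε : 0 < ε) :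
    ∃ N : Finset ℝ, (∀ x ∈ N, ContinuousAt F x) ∧
      ∀ G : ℝ → ℝ, IsCDF G → phi F α G ≤ psi F N G + ε := by
  have hFm := hF.1
  have hD : Dense {x : ℝ | ¬ContinuousAt F x}ᶜ :=
    Set.Countable.dense_compl ℝ hFm.countable_not_continuousAt
  obtain ⟨a, ha⟩ := eventually_atBot.1 (hF.2.2.1.eventually_lt_const hε)
  obtain ⟨b, hb⟩ := eventually_atTop.1
    (hF.2.2.2.eventually_const_lt (show 1 - ε < 1 by linarith))
  set s : ℝ := a - α with hs_def
  set n : ℕ := ⌈(b - a + α) * 2 / α⌉₊ with hn_def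
  have hyex : ∀ i : ℕ, ∃ z : ℝ, s + i * (α / 2) < z ∧ z < s + i * (α / 2) + α / 2 ∧
      ContinuousAt F z := by
    intro i
    obtain ⟨c, hcs, hc1, hc2⟩ :=
      hD.exists_between (show s + i * (α / 2) < s + i * (α / 2) + α / 2 by linarith)
    exact ⟨c, hc1, hc2, not_not.1 hcs⟩
  choose y hylo hyhi hyc using hyex
  have ymono : ∀ i j : ℕ, i < j → y i < y j := by
    intro i j hij
    have h1 : (i : ℝ) + 1 ≤ (j : ℝ) := by exact_mod_cast hij
    have h2 : ((i : ℝ) + 1) * (α / 2) ≤ (j : ℝ) * (α / 2) :=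
      mul_le_mul_of_nonneg_right h1 (by linarith)
    have := hyhi i; have := hylo j
    nlinarith
  have ygap : ∀ i : ℕ, y (i + 1) - y i < α := by
    intro i
    have h1 := hyhi (i + 1); have h2 := hylo i
    push_cast at h1
    nlinarith
  have hy0a : y 0 < a := by
    have := hyhi 0; push_cast at this; linarith
  have hynb : b ≤ y n := by
    have h1 : (b - a + α) * 2 / α ≤ (n : ℝ) := Nat.le_ceil _
    have h2 : (b - a + α) * 2 ≤ (n : ℝ) * α := (div_le_iff₀ hα).1 h1
    have h3 := hylo n
    nlinarith
  refine ⟨(Finset.range (n + 1)).image y, ?_, ?_⟩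
  · intro x hx
    obtain ⟨i, _, rfl⟩ := Finset.mem_image.1 hx
    exact hyc i
  · intro G hG
    set N := (Finset.range (n + 1)).image y with hN
    set P := psi F N G with hP
    have hGm := hG.1
    have hkey : ∀ i : ℕ, i ≤ n → |F (y i) - G (y i)| ≤ P := by
      intro i hi
      exact abs_le_psi hF hG N
        (Finset.mem_image_of_mem y (Finset.mem_range.2 (Nat.lt_succ_of_le hi)))
    have hP0 : 0 ≤ P := (abs_nonneg _).trans (hkey 0 n.zero_le)
    apply ciSup_le
    intro x
    apply max_le
    · -- F (x - α) - G x ≤ P + ε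
      rcases le_or_gt x (y 0) with h0 | h0
      · have h1 : F (x - α) < ε := ha (x - α) (by linarith)
        have h2 := hG.nonneg' x
        linarith
      rcases le_or_gt (y n) x with h1 | h1
      · have h2 : 1 - ε < F (y n) := hb (y n) hynb
        have h3 : G (y n) ≤ G x := hGm h1
        have h4 : F (y n) - G (y n) ≤ |F (y n) - G (y n)| := le_abs_self _
        have h5 := hkey n le_rfl
        have h6 := hF.le_one' (x - α)
        linarith
      · have hex : ∃ j, x < y j := ⟨n, h1⟩
        have hky : x < y (Nat.find hex) := Nat.find_spec hex
        have hkpos : Nat.find hex ≠ 0 := by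
          intro h; rw [h] at hky; exact absurd hky (not_lt.2 h0.le)
        obtain ⟨i, hi⟩ := Nat.exists_eq_succ_of_ne_zero hkpos
        have hyi : y i ≤ x := not_lt.1 (Nat.find_min hex (by omega))
        have hfm := Nat.find_min' hex h1
        have hin : i + 1 ≤ n := by omega
        have hxy : x < y (i + 1) := by rw [hi] at hky; exact hky
        have hgap := ygap i
        have h2 : F (x - α) ≤ F (y i) := hFm (by linarith)
        have h3 : G (y i) ≤ G x := hGm hyi
        have h4 : F (y i) - G (y i) ≤ |F (y i) - G (y i)| := le_abs_self _
        have h5 := hkey i (by omega)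
        linarith
    · -- G x - F (x + α) ≤ P + ε
      rcases le_or_gt x (y 0) with h0 | h0
      · have h1 : F (y 0) < ε := ha (y 0) hy0a.le
        have h2 : G x ≤ G (y 0) := hGm h0
        have h3 : G (y 0) - F (y 0) ≤ |F (y 0) - G (y 0)| := by
          rw [abs_sub_comm]; exact le_abs_self _
        have h4 := hkey 0 n.zero_le
        have h5 := hF.nonneg' (x + α)
        linarith
      rcases le_or_gt (y n) x with h1 | h1
      · have h2 : 1 - ε < F (y n) := hb (y n) hynb
        have h3 : F (y n) ≤ F (x + α) := hFm (by linarith)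
        have h4 := hG.le_one' x
        linarith
      · have hex : ∃ j, x < y j := ⟨n, h1⟩
        have hky : x < y (Nat.find hex) := Nat.find_spec hex
        have hkpos : Nat.find hex ≠ 0 := by
          intro h; rw [h] at hky; exact absurd hky (not_lt.2 h0.le)
        obtain ⟨i, hi⟩ := Nat.exists_eq_succ_of_ne_zero hkpos
        have hyi : y i ≤ x := not_lt.1 (Nat.find_min hex (by omega))
        have hfm := Nat.find_min' hex h1
        have hin : i + 1 ≤ n := by omega
        have hxy : x < y (i + 1) := by rw [hi] at hky; exact hky
        have hgap := ygap i
        have h2 : G x ≤ G (y (i + 1)) := hGm hxy.le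
        have h3 : F (y (i + 1)) ≤ F (x + α) := hFm (by linarith)
        have h4 : G (y (i + 1)) - F (y (i + 1)) ≤ |F (y (i + 1)) - G (y (i + 1))| := by
          rw [abs_sub_comm]; exact le_abs_self _
        have h5 := hkey (i + 1) hin
        linarith
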